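/- Suppose Assumption 1 (full rank) and Assumption 2 (no separation) hold. Then the conditional log-likelihood is coercive in the sense that log L(β) → −∞ as ‖β‖ → ∞; equivalently, for every M ∈ ℝ there exists R > 0 such that ‖β‖ > R implies log L(β) < M. (Key step in the proof of existence of the conditional maximum likelihood estimate in Theorem 1.) -/
import Mathlib

set_option maxHeartbeats 1000000


open scoped BigOperators RealInnerProductSpace

noncomputable section

/-- Real value of a binary indicator. -/
def bval (b : Bool) : ℝ := if b then 1 else 0

/-- The alternative set `B_i = {d ∈ {0,1}^T : ∑_t d_t = ∑_t Y_{it}}`. -/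
def altSet (T : ℕ) (Yi : Fin T → Bool) : Finset (Fin T → Bool) :=
  Finset.univ.filter fun d => (∑ t, (d t).toNat) = ∑ t, (Yi t).toNat

/-- The conditional log-likelihood `log L(β)`. -/
def logL {n T p : ℕ} (X : Fin n → Fin T → EuclideanSpace ℝ (Fin p))
    (Y : Fin n → Fin T → Bool) (β : EuclideanSpace ℝ (Fin p)) : ℝ :=
  ∑ i, ((∑ t, bval (Y i t) * ⟪X i t, β⟫) -
    Real.log (∑ d ∈ altSet T (Y i), Real.exp (∑ t, bval (d t) * ⟪X i t, β⟫)))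

/-- The conditional-logit (softmax) weights `w_i(d; β)`. -/
def cweight {n T p : ℕ} (X : Fin n → Fin T → EuclideanSpace ℝ (Fin p))
    (Y : Fin n → Fin T → Bool) (i : Fin n) (d : Fin T → Bool)
    (β : EuclideanSpace ℝ (Fin p)) : ℝ :=
  Real.exp (∑ t, bval (d t) * ⟪X i t, β⟫) /
    ∑ f ∈ altSet T (Y i), Real.exp (∑ t, bval (f t) * ⟪X i t, β⟫)

/-- Row index set of the matrix in Assumption 1: pairs `(i, d)` with `d ∈ B_i`. -/
abbrev RowIdx (n T : ℕ) (Y : Fin n → Fin T → Bool) :=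
  (i : Fin n) × {d : Fin T → Bool // d ∈ altSet T (Y i)}

/-- The matrix of Assumption 1, evaluated at `β`. -/
def rowMat {n T p : ℕ} (X : Fin n → Fin T → EuclideanSpace ℝ (Fin p))
    (Y : Fin n → Fin T → Bool) (β : EuclideanSpace ℝ (Fin p)) :
    Matrix (RowIdx n T Y) (Fin p) ℝ :=
  fun r k =>
    (∑ t, bval (r.2.1 t) * X r.1 t k) -
      ∑ e ∈ altSet T (Y r.1),
        cweight X Y r.1 e β * ∑ t, bval (e t) * X r.1 t k

/-- Assumption 1 (full rank). -/
def Assumption1 {n T p : ℕ} (X : Fin n → Fin T → EuclideanSpace ℝ (Fin p))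
    (Y : Fin n → Fin T → Bool) : Prop :=
  ∀ β : EuclideanSpace ℝ (Fin p), (rowMat X Y β).rank = p

/-- Assumption 2 (no separation). -/
def Assumption2 {n T p : ℕ} (X : Fin n → Fin T → EuclideanSpace ℝ (Fin p))
    (Y : Fin n → Fin T → Bool) : Prop :=
  ¬ ∃ βstar : EuclideanSpace ℝ (Fin p), βstar ≠ 0 ∧
      ∀ i, ∀ d ∈ altSet T (Y i),
        0 ≤ ∑ t, (bval (d t) - bval (Y i t)) * ⟪X i t, βstar⟫

/-- The vectors `v_{i,d} = ∑_t (d_t − Y_{it}) X_{it}`. -/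
def vvec {n T p : ℕ} (X : Fin n → Fin T → EuclideanSpace ℝ (Fin p))
    (Y : Fin n → Fin T → Bool) (i : Fin n) (d : Fin T → Bool) :
    EuclideanSpace ℝ (Fin p) :=
  ∑ t, (bval (d t) - bval (Y i t)) • X i t

/-- Inner product with `vvec`. -/
lemma inner_vvec {n T p : ℕ} (X : Fin n → Fin T → EuclideanSpace ℝ (Fin p))
    (Y : Fin n → Fin T → Bool) (i : Fin n) (d : Fin T → Bool)
    (β : EuclideanSpace ℝ (Fin p)) :
    ⟪vvec X Y i d, β⟫ = ∑ t, (bval (d t) - bval (Y i t)) * ⟪X i t, β⟫ := by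
  simp only [vvec, sum_inner, real_inner_smul_left]

lemma Y_mem_altSet {T : ℕ} (Yi : Fin T → Bool) : Yi ∈ altSet T Yi := by
  simp [altSet]

/-- Key bound: `logL β ≤ -⟪v_{i₀,d₀}, β⟫` for any row `(i₀, d₀)`. -/
lemma logL_le {n T p : ℕ} (X : Fin n → Fin T → EuclideanSpace ℝ (Fin p))
    (Y : Fin n → Fin T → Bool) (β : EuclideanSpace ℝ (Fin p)) (i₀ : Fin n)
    (d₀ : Fin T → Bool) (hd₀ : d₀ ∈ altSet T (Y i₀)) :
    logL X Y β ≤ -⟪vvec X Y i₀ d₀, β⟫ := by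
  -- the general estimate for a single summand
  have hgen : ∀ i : Fin n, ∀ d ∈ altSet T (Y i),
      (∑ t, bval (Y i t) * ⟪X i t, β⟫) -
        Real.log (∑ e ∈ altSet T (Y i), Real.exp (∑ t, bval (e t) * ⟪X i t, β⟫))
        ≤ -⟪vvec X Y i d, β⟫ := by
    intro i d hd
    have hpos : (0 : ℝ) <
        ∑ e ∈ altSet T (Y i), Real.exp (∑ t, bval (e t) * ⟪X i t, β⟫) := by
      apply Finset.sum_pos (fun e _ => Real.exp_pos _) ⟨d, hd⟩
    have hle : Real.exp (∑ t, bval (d t) * ⟪X i t, β⟫) ≤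
        ∑ e ∈ altSet T (Y i), Real.exp (∑ t, bval (e t) * ⟪X i t, β⟫) := by
      apply Finset.single_le_sum (fun e _ => (Real.exp_pos _).le) hd
    have hlog : (∑ t, bval (d t) * ⟪X i t, β⟫) ≤
        Real.log (∑ e ∈ altSet T (Y i), Real.exp (∑ t, bval (e t) * ⟪X i t, β⟫)) := by
      exact (Real.le_log_iff_exp_le hpos).2 hle
    have hsplit : (∑ t, bval (d t) * ⟪X i t, β⟫) =
        (∑ t, bval (Y i t) * ⟪X i t, β⟫) + ⟪vvec X Y i d, β⟫ := by
      rw [inner_vvec, ← Finset.sum_add_distrib]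
      congr 1; funext t; ring
    rw [hsplit] at hlog
    linarith
  have hzero : ∀ i : Fin n,
      (∑ t, bval (Y i t) * ⟪X i t, β⟫) -
        Real.log (∑ e ∈ altSet T (Y i), Real.exp (∑ t, bval (e t) * ⟪X i t, β⟫))
        ≤ 0 := by
    intro i
    have := hgen i (Y i) (Y_mem_altSet (Y i))
    have hv : ⟪vvec X Y i (Y i), β⟫ = 0 := by
      rw [inner_vvec]; simp
    rw [hv] at this
    linarith
  calc logL X Y β ≤ ∑ i, (if i = i₀ then -⟪vvec X Y i₀ d₀, β⟫ else 0) := by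
        apply Finset.sum_le_sum
        intro i _
        by_cases h : i = i₀
        · subst h; simpa using hgen i d₀ hd₀
        · simpa [h] using hzero i
    _ = -⟪vvec X Y i₀ d₀, β⟫ := by simp

/-- Under full rank and no separation, the conditional log-likelihood is coercive:
`log L(β) → −∞` as `‖β‖ → ∞`. -/
theorem stmt11 {n T p : ℕ} (hn : 1 ≤ n) (hT : 1 ≤ T) (hp : 1 ≤ p)
    (X : Fin n → Fin T → EuclideanSpace ℝ (Fin p)) (Y : Fin n → Fin T → Bool)
    (h1 : Assumption1 X Y) (h2 : Assumption2 X Y) :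
    ∀ M : ℝ, ∃ R : ℝ, 0 < R ∧
      ∀ β : EuclideanSpace ℝ (Fin p), R < ‖β‖ → logL X Y β < M := by
  intro M
  haveI : Nontrivial (EuclideanSpace ℝ (Fin p)) := by
    refine ⟨0, EuclideanSpace.single ⟨0, hp⟩ 1, fun h => ?_⟩
    have := congrArg (fun v => v ⟨0, hp⟩) h
    simp [EuclideanSpace.single_apply] at this
  have i0 : Fin n := ⟨0, hn⟩
  have huniv : (Finset.univ : Finset (RowIdx n T Y)).Nonempty :=
    ⟨⟨i0, ⟨Y i0, Y_mem_altSet (Y i0)⟩⟩, Finset.mem_univ _⟩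
  set F : EuclideanSpace ℝ (Fin p) → ℝ :=
    fun u => Finset.univ.sup' huniv (fun r : RowIdx n T Y => ⟪vvec X Y r.1 r.2.1, u⟫)
    with hF
  have Fcont : Continuous F := by
    apply Continuous.finset_sup'_apply huniv
    intro r _
    exact (innerSL ℝ (vvec X Y r.1 r.2.1)).continuous
  -- F is positive on the unit sphere
  have Fpos : ∀ u : EuclideanSpace ℝ (Fin p), ‖u‖ = 1 → 0 < F u := by
    intro u hu
    by_contra hne
    push_neg at hne
    apply h2
    refine ⟨-u, ?_, ?_⟩
    · intro h
      have : u = 0 := by simpa using congrArg Neg.neg h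
      rw [this] at hu; simp at hu
    · intro i d hd
      have hle : ⟪vvec X Y i d, u⟫ ≤ F u :=
        Finset.le_sup' (fun r : RowIdx n T Y => ⟪vvec X Y r.1 r.2.1, u⟫)
          (Finset.mem_univ (⟨i, ⟨d, hd⟩⟩ : RowIdx n T Y))
      have h0 : ⟪vvec X Y i d, u⟫ ≤ 0 := le_trans hle hne
      have : ∑ t, (bval (d t) - bval (Y i t)) * ⟪X i t, -u⟫ =
          -⟪vvec X Y i d, u⟫ := by
        rw [← inner_vvec, inner_neg_right]
      rw [this]
      linarith
  -- minimum of F on the sphere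
  have hsph : (Metric.sphere (0 : EuclideanSpace ℝ (Fin p)) 1).Nonempty :=
    NormedSpace.sphere_nonempty.2 zero_le_one
  obtain ⟨u₀, hu₀, hmin'⟩ :=
    (isCompact_sphere (0 : EuclideanSpace ℝ (Fin p)) 1).exists_isMinOn hsph
      Fcont.continuousOn
  have hmin : ∀ u ∈ Metric.sphere (0 : EuclideanSpace ℝ (Fin p)) 1, F u₀ ≤ F u :=
    fun u hu => isMinOn_iff.mp hmin' u hu
  set δ : ℝ := F u₀ with hδ
  have hδpos : 0 < δ := Fpos u₀ (by simpa using mem_sphere_zero_iff_norm.1 hu₀)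
  refine ⟨max 1 ((|M| + 1) / δ), lt_max_iff.2 (Or.inl one_pos), ?_⟩
  intro β hβ
  have hβ1 : (1 : ℝ) < ‖β‖ := lt_of_le_of_lt (le_max_left _ _) hβ
  have hβpos : (0 : ℝ) < ‖β‖ := lt_trans one_pos hβ1
  set u : EuclideanSpace ℝ (Fin p) := ‖β‖⁻¹ • β with hu
  have hunorm : ‖u‖ = 1 := by
    rw [hu, norm_smul, norm_inv, norm_norm, inv_mul_cancel₀ hβpos.ne']
  -- pick the row attaining the sup at u
  obtain ⟨r, _, hr⟩ := Finset.exists_mem_eq_sup' huniv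
    (fun r : RowIdx n T Y => ⟪vvec X Y r.1 r.2.1, u⟫)
  have hδle : δ ≤ ⟪vvec X Y r.1 r.2.1, u⟫ := by
    have := hmin u (mem_sphere_zero_iff_norm.2 hunorm)
    rw [hF] at this
    simpa [← hr] using this
  have hβu : β = ‖β‖ • u := by
    rw [hu, smul_smul, mul_inv_cancel₀ hβpos.ne', one_smul]
  have hinner : (‖β‖ : ℝ) * δ ≤ ⟪vvec X Y r.1 r.2.1, β⟫ := by
    have huβ : ⟪vvec X Y r.1 r.2.1, u⟫ = ‖β‖⁻¹ * ⟪vvec X Y r.1 r.2.1, β⟫ := by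
      rw [hu, real_inner_smul_right]
    calc ‖β‖ * δ ≤ ‖β‖ * ⟪vvec X Y r.1 r.2.1, u⟫ := by
          exact mul_le_mul_of_nonneg_left hδle hβpos.le
      _ = ⟪vvec X Y r.1 r.2.1, β⟫ := by
          rw [huβ, ← mul_assoc, mul_inv_cancel₀ hβpos.ne', one_mul]
  have hkey := logL_le X Y β r.1 r.2.1 r.2.2
  have hRδ : (|M| + 1) / δ * δ = |M| + 1 := div_mul_cancel₀ _ hδpos.ne'
  have hβR : (|M| + 1) / δ < ‖β‖ := lt_of_le_of_lt (le_max_right _ _) hβ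
  have : |M| + 1 < ‖β‖ * δ := by
    calc |M| + 1 = (|M| + 1) / δ * δ := hRδ.symm
      _ < ‖β‖ * δ := by exact mul_lt_mul_of_pos_right hβR hδpos
  have hM : -M ≤ |M| := neg_le_abs M
  linarith [hkey, hinner]
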